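/- If G is a graph with genus g(G) ≤ 2, then gon(G) ≤ 2. -/

import Mathlib

/-- A finite loopless multigraph: a finite vertex type, a finite edge type,
and an assignment of an unordered pair of distinct endpoints to each edge. -/
structure Multigraph where
  V : Type
  E : Type
  [fintypeV : Fintype V]
  [fintypeE : Fintype E]
  [decEqV : DecidableEq V]
  ends : E → Sym2 V
  loopless : ∀ e, ¬ (ends e).IsDiag

attribute [instance] Multigraph.fintypeV Multigraph.fintypeE Multigraph.decEqV

namespace Multigraph

/-- The graph obtained by deleting the edges in `W` is connected (finite graphs are
connected iff the vertex set is nonempty and every nonempty proper vertex subset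
has an edge leaving it). -/
def ConnectedWithout (G : Multigraph) (W : Set G.E) : Prop :=
  Nonempty G.V ∧
    ∀ A : Finset G.V, A.Nonempty → A ≠ Finset.univ →
      ∃ e, e ∉ W ∧ ∃ u v, G.ends e = s(u, v) ∧ u ∈ A ∧ v ∉ A

/-- `G` is connected. -/
def Connected (G : Multigraph) : Prop := G.ConnectedWithout ∅

/-- `G` is `k`-edge-connected: deleting any set of at most `k - 1` edges
leaves a connected graph. -/
def EdgeConnected (G : Multigraph) (k : ℕ) : Prop :=
  ∀ W : Finset G.E, W.card < k → G.ConnectedWithout ↑W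

/-- An edge is a bridge if deleting it disconnects the graph. -/
def IsBridge (G : Multigraph) (e : G.E) : Prop := ¬ G.ConnectedWithout {e}

/-- The graph obtained by deleting the vertices in `U` (and all incident edges)
is connected. -/
def ConnectedAvoiding (G : Multigraph) (U : Set G.V) : Prop :=
  (∃ v, v ∉ U) ∧
    ∀ A : Finset G.V, A.Nonempty → (∀ a ∈ A, a ∉ U) → (∃ w, w ∉ U ∧ w ∉ A) →
      ∃ e u v, G.ends e = s(u, v) ∧ u ∈ A ∧ v ∉ A ∧ v ∉ U

/-- `G` is `k`-vertex-connected: deleting any set of at most `k - 1` vertices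
leaves a connected graph. -/
def VertexConnected (G : Multigraph) (k : ℕ) : Prop :=
  ∀ U : Finset G.V, U.card < k → G.ConnectedAvoiding ↑U

/-- `G` is simple: no two distinct edges have the same pair of endpoints. -/
def Simple (G : Multigraph) : Prop :=
  ∀ e e' : G.E, G.ends e = G.ends e' → e = e'

/-- The genus `g(G) = |E| - |V| + 1`. -/
def genus (G : Multigraph) : ℤ :=
  (Fintype.card G.E : ℤ) - (Fintype.card G.V : ℤ) + 1

/-- A tree is a connected graph of genus 0. -/
def IsTree (G : Multigraph) : Prop := G.Connected ∧ G.genus = 0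

/-- The number of edges joining `u` and `v`. -/
noncomputable def numEdges (G : Multigraph) (u v : G.V) : ℕ :=
  Set.ncard {e : G.E | G.ends e = s(u, v)}

/-- The valence of a vertex: the number of incident edges. -/
noncomputable def valence (G : Multigraph) (v : G.V) : ℕ :=
  Set.ncard {e : G.E | v ∈ G.ends e}

/-- A divisor on `G`: an element of the free abelian group on `V(G)`. -/
abbrev Divisor (G : Multigraph) : Type := G.V → ℤ

/-- The degree of a divisor: the sum of its coefficients. -/
def degree (G : Multigraph) (D : G.Divisor) : ℤ := ∑ v, D v

/-- A divisor is effective if all its coefficients are nonnegative. -/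
def Effective (G : Multigraph) (D : G.Divisor) : Prop := ∀ v, 0 ≤ D v

/-- The Laplacian of `G` applied to an integer vector `f`. -/
noncomputable def laplacian (G : Multigraph) (f : G.V → ℤ) : G.Divisor :=
  fun v => ∑ w, (G.numEdges v w : ℤ) * (f v - f w)

/-- Linear equivalence of divisors: the difference is in the image of the Laplacian. -/
def LinEquiv (G : Multigraph) (D D' : G.Divisor) : Prop :=
  ∃ f : G.V → ℤ, D - D' = G.laplacian f

/-- `D - F` is equivalent to an effective divisor for every effective `F` of degree `k`. -/
def RankGe (G : Multigraph) (D : G.Divisor) (k : ℤ) : Prop :=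
  ∀ F : G.Divisor, G.Effective F → G.degree F = k →
    ∃ E' : G.Divisor, G.Effective E' ∧ G.LinEquiv (D - F) E'

/-- The Baker–Norine rank of a divisor. -/
noncomputable def rank (G : Multigraph) (D : G.Divisor) : ℤ :=
  sSup {r : ℤ | r = -1 ∨ (0 ≤ r ∧ G.RankGe D r)}

/-- The (divisorial) gonality of `G`: the minimum degree of an effective divisor
of rank at least 1. -/
noncomputable def gonality (G : Multigraph) : ℕ :=
  sInf {n : ℕ | ∃ D : G.Divisor, G.Effective D ∧ G.degree D = (n : ℤ) ∧ 1 ≤ G.rank D}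

end Multigraph

/-- A morphism of multigraphs: vertices map to vertices, and each edge maps either
to an edge joining the images of its endpoints (if they are distinct) or to the
common image of its endpoints. -/
structure Morphism (G G' : Multigraph) where
  vertexMap : G.V → G'.V
  edgeMap : G.E → G'.E ⊕ G'.V
  map_edge_of_eq : ∀ e u v, G.ends e = s(u, v) → vertexMap u = vertexMap v →
    edgeMap e = Sum.inr (vertexMap u)
  map_edge_of_ne : ∀ e u v, G.ends e = s(u, v) → vertexMap u ≠ vertexMap v →
    ∃ e', edgeMap e = Sum.inl e' ∧ G'.ends e' = s(vertexMap u, vertexMap v)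

namespace Morphism

variable {G G' : Multigraph}

/-- The multiplicity `m_φ(v)` of `φ` at `v` with respect to an edge `e'` of `G'`. -/
noncomputable def mult (φ : Morphism G G') (v : G.V) (e' : G'.E) : ℕ :=
  Set.ncard {e : G.E | v ∈ G.ends e ∧ φ.edgeMap e = Sum.inl e'}

/-- `φ` is harmonic if `m_φ(v)` does not depend on the chosen edge `e'`
incident to `φ(v)`. -/
def Harmonic (φ : Morphism G G') : Prop :=
  ∀ (v : G.V) (e₁ e₂ : G'.E),
    φ.vertexMap v ∈ G'.ends e₁ → φ.vertexMap v ∈ G'.ends e₂ →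
      φ.mult v e₁ = φ.mult v e₂

/-- `φ` is non-degenerate if `m_φ(v) > 0` for every vertex `v`. -/
def Nondegenerate (φ : Morphism G G') : Prop :=
  ∀ (v : G.V) (e' : G'.E), φ.vertexMap v ∈ G'.ends e' → 0 < φ.mult v e'

/-- `φ` has degree `d`: every edge of `G'` has exactly `d` preimages. -/
def HasDegree (φ : Morphism G G') (d : ℕ) : Prop :=
  Nonempty G'.E ∧ ∀ e' : G'.E, Set.ncard {e : G.E | φ.edgeMap e = Sum.inl e'} = d

end Morphism

/-!
In genus at most 1 the divisor `2v` works, because every divisor of degree at least `g` is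
equivalent to an effective one: its `q`-reduced representative `D'` satisfies `D' + 1 ≤ indeg`
away from `q` for the acyclic orientation given by Dhar's burning algorithm, and `∑ indeg = |E|`.
In genus 2 the canonical divisor `K` has degree `2 = g`, so it is equivalent to an effective `D`.
If some `D - q` were not equivalent to an effective divisor, the same comparison would force
`D - q ~ indeg_O - 1` for an acyclic orientation `O`, hence `q ~ K - (indeg_O - 1) = indeg_Ō - 1`
for the reversed orientation `Ō`; the maximum principle shows that `indeg_Ō - 1` is not
equivalent to any effective divisor.
-/

namespace Multigraph

open Finset Function OrderDual

variable (G : Multigraph)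

lemma numEdges_eq_card (u v : G.V) : G.numEdges u v = #{e | G.ends e = s(u, v)} := by
  rw [numEdges, ← Set.ncard_coe_finset]
  congr
  ext
  simp

lemma numEdges_comm (u v : G.V) : G.numEdges u v = G.numEdges v u := by
  simp only [numEdges, Sym2.eq_swap]

lemma numEdges_self (v : G.V) : G.numEdges v v = 0 := by
  rw [numEdges_eq_card, card_eq_zero, filter_eq_empty_iff]
  exact fun e _ he => G.loopless e (he ▸ Sym2.mk_isDiag_iff.mpr rfl)

noncomputable def numEdgesTo (w : G.V) (S : Finset G.V) : ℕ := ∑ x ∈ S, G.numEdges w x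

lemma numEdgesTo_mono (w : G.V) {S T : Finset G.V} (h : S ⊆ T) :
    G.numEdgesTo w S ≤ G.numEdgesTo w T :=
  sum_le_sum_of_subset h

lemma numEdgesTo_eq_card (w : G.V) (S : Finset G.V) :
    G.numEdgesTo w S = #{e | ∃ x ∈ S, G.ends e = s(w, x)} := by
  classical
  simp_rw [numEdgesTo, numEdges_eq_card]
  rw [← card_biUnion]
  · congr 1
    ext e
    simp
  · intro x _ y _ hxy
    refine disjoint_left.mpr fun e hx hy => hxy ?_
    simp only [mem_filter] at hx hy
    exact Sym2.congr_right.mp (hx.2.symm.trans hy.2)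

lemma valence_eq_numEdgesTo (w : G.V) : G.valence w = G.numEdgesTo w univ := by
  rw [valence, numEdgesTo_eq_card, ← Set.ncard_coe_finset]
  congr
  ext e
  simp [Sym2.mem_iff_exists, eq_comm]

lemma Connected.exists_numEdges_pos {G : Multigraph} (hG : G.Connected) {A : Finset G.V}
    (hA : A.Nonempty) (hA' : A ≠ univ) : ∃ u ∈ A, ∃ v ∉ A, 0 < G.numEdges u v := by
  obtain ⟨e, -, u, v, he, hu, hv⟩ := hG.2 A hA hA'
  refine ⟨u, hu, v, hv, ?_⟩
  rw [numEdges_eq_card, card_pos]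
  exact ⟨e, by simp [he]⟩

/-- The in-degree of `w` in the acyclic orientation directing every edge towards its endpoint
with the larger `p`-value. -/
noncomputable def indeg {α : Type*} [LinearOrder α] (p : G.V → α) (w : G.V) : ℕ :=
  G.numEdgesTo w {x | p x < p w}

lemma exists_ends_eq (e : G.E) : ∃ a b, a ≠ b ∧ G.ends e = s(a, b) := by
  induction h : G.ends e using Sym2.ind with
  | _ a b => exact ⟨a, b, fun hab => G.loopless e (by simp [h, hab]), rfl⟩

lemma sum_indeg {α : Type*} [LinearOrder α] {p : G.V → α} (hp : Injective p) :
    ∑ w, G.indeg p w = Fintype.card G.E := by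
  classical
  simp_rw [indeg, numEdgesTo_eq_card]
  rw [← card_biUnion, ← card_univ]
  · congr 1
    refine eq_univ_of_forall fun e => ?_
    obtain ⟨a, b, hab, he⟩ := G.exists_ends_eq e
    simp only [mem_biUnion, mem_univ, mem_filter, true_and]
    rcases (hp.ne hab).lt_or_gt with h | h
    · exact ⟨b, a, h, he.trans Sym2.eq_swap⟩
    · exact ⟨a, b, h, he⟩
  · intro w _ w' _ hww'
    refine disjoint_left.mpr fun e he he' => ?_
    simp only [mem_filter, mem_univ, true_and] at he he'
    obtain ⟨x, hx, hex⟩ := he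
    obtain ⟨x', hx', hex'⟩ := he'
    rcases Sym2.eq_iff.mp (hex.symm.trans hex') with ⟨rfl, -⟩ | ⟨rfl, rfl⟩
    · exact hww' rfl
    · exact (hx.trans hx').false

lemma indeg_add_indeg_toDual {α : Type*} [LinearOrder α] {p : G.V → α} (hp : Injective p)
    (w : G.V) :
    G.indeg p w + G.indeg (toDual ∘ p) w = G.valence w := by
  simp only [valence_eq_numEdgesTo, indeg, numEdgesTo, sum_filter, ← sum_add_distrib]
  refine sum_congr rfl fun x _ => ?_
  rcases eq_or_ne x w with rfl | hxw
  · simp [numEdges_self]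
  · rcases (hp.ne hxw).lt_or_gt with h | h <;> simp [h, h.not_gt]

lemma sum_valence : ∑ w, G.valence w = 2 * Fintype.card G.E := by
  have hp := (Fintype.equivFin G.V).injective
  simp_rw [← G.indeg_add_indeg_toDual hp, sum_add_distrib, G.sum_indeg hp,
    G.sum_indeg (toDual.injective.comp hp)]
  ring

lemma laplacian_add (f g : G.V → ℤ) : G.laplacian (f + g) = G.laplacian f + G.laplacian g := by
  ext v
  simp only [laplacian, Pi.add_apply, ← sum_add_distrib]
  exact sum_congr rfl fun _ _ => by ring

lemma laplacian_smul (t : ℤ) (f : G.V → ℤ) : G.laplacian (t • f) = t • G.laplacian f := by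
  ext v
  simp only [laplacian, Pi.smul_apply, smul_eq_mul, mul_sum]
  exact sum_congr rfl fun _ _ => by ring

lemma laplacian_sub_const (f : G.V → ℤ) (a : ℤ) :
    G.laplacian (fun v => f v - a) = G.laplacian f := by
  ext v
  simp only [laplacian, sub_sub_sub_cancel_right]

lemma laplacian_indicator_of_mem {S : Finset G.V} {w : G.V} (hw : w ∈ S) :
    G.laplacian ((S : Set G.V).indicator 1) w = G.numEdgesTo w Sᶜ := by
  rw [laplacian, ← sum_add_sum_compl S, numEdgesTo, Nat.cast_sum]
  have hS : ∀ x ∈ S, (G.numEdges w x : ℤ) * ((S : Set G.V).indicator 1 w -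
      (S : Set G.V).indicator 1 x) = 0 := fun x hx => by simp [hw, hx]
  rw [sum_eq_zero hS, zero_add]
  exact sum_congr rfl fun x hx => by simp [hw, mem_compl.mp hx]

lemma laplacian_indicator_of_notMem {S : Finset G.V} {w : G.V} (hw : w ∉ S) :
    G.laplacian ((S : Set G.V).indicator 1) w = -G.numEdgesTo w S := by
  rw [laplacian, ← sum_add_sum_compl S, numEdgesTo, Nat.cast_sum, ← sum_neg_distrib]
  have hS : ∀ x ∈ Sᶜ, (G.numEdges w x : ℤ) * ((S : Set G.V).indicator 1 w -
      (S : Set G.V).indicator 1 x) = 0 := fun x hx => by simp [hw, mem_compl.mp hx]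
  rw [sum_eq_zero hS, add_zero]
  exact sum_congr rfl fun x hx => by simp [hw, hx]

/-- The terms of the edges inside `A` cancel in pairs. -/
lemma sum_laplacian_eq (f : G.V → ℤ) (A : Finset G.V) :
    ∑ w ∈ A, G.laplacian f w = ∑ w ∈ A, ∑ x ∈ Aᶜ, (G.numEdges w x : ℤ) * (f w - f x) := by
  have hinner : ∑ w ∈ A, ∑ x ∈ A, (G.numEdges w x : ℤ) * (f w - f x) = 0 := by
    have hanti : ∑ w ∈ A, ∑ x ∈ A, (G.numEdges w x : ℤ) * (f w - f x) =
        -∑ w ∈ A, ∑ x ∈ A, (G.numEdges w x : ℤ) * (f w - f x) := by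
      conv_lhs => rw [sum_comm]
      simp only [← sum_neg_distrib]
      refine sum_congr rfl fun _ _ => sum_congr rfl fun _ _ => ?_
      rw [numEdges_comm]
      ring
    omega
  simp only [laplacian, ← sum_add_sum_compl A, sum_add_distrib, hinner, zero_add]

lemma sum_laplacian (f : G.V → ℤ) : ∑ w, G.laplacian f w = 0 := by
  simpa using G.sum_laplacian_eq f univ

lemma degree_eq_of_linEquiv {D D' : G.Divisor} (h : G.LinEquiv D D') :
    G.degree D = G.degree D' := by
  obtain ⟨f, hf⟩ := h
  have := G.sum_laplacian f
  simp only [← hf, Pi.sub_apply, sum_sub_distrib, sub_eq_zero] at this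
  exact this

lemma exists_laplacian_le_outside (hG : G.Connected) (c : G.Divisor) {S : Finset G.V}
    (hS : S.Nonempty) : ∃ f : G.V → ℤ, ∀ w ∉ S, G.laplacian f w ≤ c w := by
  induction h : #Sᶜ generalizing S with
  | zero =>
    exact ⟨0, fun w hw => absurd (card_eq_zero.mp h) (ne_empty_of_mem (mem_compl.mpr hw))⟩
  | succ n ih =>
    obtain ⟨u, hu, v, hv, huv⟩ :=
      hG.exists_numEdges_pos hS (by rintro rfl; simp at h)
    obtain ⟨f, hf⟩ := ih (S := insert v S) (insert_nonempty v S)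
      (by rw [compl_insert, card_erase_of_mem (mem_compl.mpr hv), h]; rfl)
    -- firing `S` a further `t` times pays off the debt at `v`, which has an edge into `S`
    set t := |c v - G.laplacian f v|
    refine ⟨f + t • (S : Set G.V).indicator 1, fun w hw => ?_⟩
    have hlap : G.laplacian (f + t • (S : Set G.V).indicator 1) w =
        G.laplacian f w - t * G.numEdgesTo w S := by
      rw [laplacian_add, laplacian_smul, Pi.add_apply, Pi.smul_apply,
        laplacian_indicator_of_notMem _ hw, smul_eq_mul]
      ring
    have ht : 0 ≤ t := abs_nonneg _
    rw [hlap]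
    rcases eq_or_ne w v with rfl | hwv
    · have hvS : 1 ≤ (G.numEdgesTo w S : ℤ) := by
        rw [G.numEdges_comm] at huv
        exact_mod_cast huv.trans_le (single_le_sum (fun _ _ => Nat.zero_le _) hu)
      nlinarith [neg_abs_le (c w - G.laplacian f w)]
    · have := hf w (by simp [hwv, hw])
      nlinarith [(G.numEdgesTo w S).cast_nonneg (α := ℤ)]

/-- Above `f q`, consecutive values of `f` are at most `C` apart. -/
lemma le_add_mul_card_of_sum_laplacian_le (hG : G.Connected) {f : G.V → ℤ} {q : G.V} {C : ℤ}
    (hC : ∀ A : Finset G.V, q ∉ A → ∑ w ∈ A, G.laplacian f w ≤ C) (w : G.V) :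
    f w ≤ f q + C * #{x | f x < f w} := by
  have hC0 : 0 ≤ C := by simpa using hC ∅ (notMem_empty q)
  induction hn : #{x | f x < f w} using Nat.strong_induction_on generalizing w with
  | _ n ih =>
  by_cases hw : f w ≤ f q
  · nlinarith [n.cast_nonneg (α := ℤ)]
  rw [not_le] at hw
  set A : Finset G.V := {x | f w ≤ f x}
  have hqA : q ∉ A := by simp [A, hw]
  obtain ⟨u, hu, v, hv, huv⟩ := hG.exists_numEdges_pos (A := A) ⟨w, by simp [A]⟩
    fun h => hqA (h ▸ mem_univ q)
  have hu' : f w ≤ f u := by simpa [A] using hu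
  have hv' : f v < f w := by simpa [A] using hv
  have hpos : ∀ a ∈ A, ∀ x ∈ Aᶜ, 0 ≤ (G.numEdges a x : ℤ) * (f a - f x) := by
    intro a ha x hx
    simp only [A, mem_compl, mem_filter, mem_univ, true_and, not_le] at ha hx
    exact mul_nonneg (Nat.cast_nonneg _) (by linarith)
  have hstep : f u - f v ≤ C :=
    calc f u - f v ≤ (G.numEdges u v : ℤ) * (f u - f v) := by
          exact le_mul_of_one_le_left (by linarith) (by exact_mod_cast huv)
      _ ≤ ∑ x ∈ Aᶜ, (G.numEdges u x : ℤ) * (f u - f x) :=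
          single_le_sum (hpos u hu) (mem_compl.mpr hv)
      _ ≤ ∑ a ∈ A, ∑ x ∈ Aᶜ, (G.numEdges a x : ℤ) * (f a - f x) :=
          single_le_sum (fun a ha => sum_nonneg (hpos a ha)) hu
      _ = ∑ a ∈ A, G.laplacian f a := (G.sum_laplacian_eq f A).symm
      _ ≤ C := hC A hqA
  have hlt : #{x | f x < f v} < n := by
    rw [← hn]
    refine card_lt_card ⟨fun x hx => ?_, fun hsub => ?_⟩
    · simp only [mem_filter, mem_univ, true_and] at hx ⊢
      exact hx.trans hv'
    · exact absurd (hsub (by simpa using hv')) (by simp)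
  have := ih _ hlt v rfl
  have : (#{x | f x < f v} : ℤ) + 1 ≤ n := by exact_mod_cast hlt
  nlinarith

lemma le_add_mul_card_of_laplacian_le (hG : G.Connected) {f : G.V → ℤ} {q : G.V}
    {D : G.Divisor} (hf : ∀ w ≠ q, G.laplacian f w ≤ D w) (w : G.V) :
    f w ≤ f q + (∑ v, max (D v) 0) * Fintype.card G.V := by
  set C := ∑ v, max (D v) 0
  have hC : ∀ A : Finset G.V, q ∉ A → ∑ w ∈ A, G.laplacian f w ≤ C := fun A hqA =>
    calc ∑ w ∈ A, G.laplacian f w ≤ ∑ w ∈ A, max (D w) 0 :=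
          sum_le_sum fun w hw => (hf w (ne_of_mem_of_not_mem hw hqA)).trans (le_max_left _ _)
      _ ≤ C := sum_le_sum_of_subset_of_nonneg (subset_univ A) fun _ _ _ => le_max_right _ _
  have hC0 : 0 ≤ C := sum_nonneg fun _ _ => le_max_right _ _
  have hcard : (#{x | f x < f w} : ℤ) ≤ Fintype.card G.V := by
    exact_mod_cast card_le_univ _
  have := G.le_add_mul_card_of_sum_laplacian_le hG hC w
  nlinarith

/-- `q`-reduced divisors, with Dhar's criterion: no nonempty set of vertices avoiding `q` can
fire without sending one of its vertices into debt. -/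
def IsReduced (q : G.V) (D : G.Divisor) : Prop :=
  (∀ w ≠ q, 0 ≤ D w) ∧
    ∀ A : Finset G.V, A.Nonempty → q ∉ A → ∃ w ∈ A, D w < G.numEdgesTo w Aᶜ

lemma exists_linEquiv_isReduced (hG : G.Connected) (D : G.Divisor) (q : G.V) :
    ∃ D', G.LinEquiv D D' ∧ G.IsReduced q D' := by
  obtain ⟨f₀, hf₀⟩ := G.exists_laplacian_le_outside hG D (singleton_nonempty q)
  set B := (∑ v, max (D v) 0) * Fintype.card G.V
  set T : Set (G.V → ℤ) :=
    {g | g q = 0 ∧ (∀ w ≠ q, G.laplacian g w ≤ D w) ∧ ∀ w, f₀ w - f₀ q ≤ g w}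
  have hT : T.Finite :=
    (Set.Finite.pi fun w => Set.finite_Icc (f₀ w - f₀ q) B).subset fun g hg =>
      Set.mem_univ_pi.mpr fun w =>
        ⟨hg.2.2 w, by simpa [hg.1] using G.le_add_mul_card_of_laplacian_le hG hg.2.1 w⟩
  have hf₀T : (fun w => f₀ w - f₀ q) ∈ T :=
    ⟨sub_self _, fun w hw => (G.laplacian_sub_const f₀ (f₀ q)).symm ▸ hf₀ w (by simpa using hw),
      fun _ => le_rfl⟩
  obtain ⟨g, ⟨hgq, hg, hg₀⟩, hmax⟩ := hT.exists_maximalFor (fun g => ∑ w, g w) T ⟨_, hf₀T⟩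
  refine ⟨D - G.laplacian g, ⟨g, by abel⟩, fun w hw => sub_nonneg.mpr (hg w hw), ?_⟩
  intro A hA hqA
  by_contra! hfire
  -- if every vertex of `A` can afford to fire, firing `A` gives a larger element of `T`
  set g' := g + (A : Set G.V).indicator 1
  have hg'T : g' ∈ T := by
    refine ⟨by simp [g', hgq, hqA], fun w hw => ?_, fun w => ?_⟩
    · rw [laplacian_add, Pi.add_apply]
      by_cases hwA : w ∈ A
      · have := hfire w hwA
        rw [laplacian_indicator_of_mem _ hwA]
        simp only [Pi.sub_apply] at this
        linarith
      · rw [laplacian_indicator_of_notMem _ hwA]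
        linarith [hg w hw, (G.numEdgesTo w A).cast_nonneg (α := ℤ)]
    · have : (0 : ℤ) ≤ (A : Set G.V).indicator 1 w := Set.indicator_nonneg (fun _ _ => zero_le_one) _
      simp only [g', Pi.add_apply]
      linarith [hg₀ w]
  have hsum : ∑ w, g' w = ∑ w, g w + #A := by
    simp [g', sum_add_distrib, Set.indicator_apply]
  have hle := hmax hg'T (show ∑ w, g w ≤ ∑ w, g' w by rw [hsum]; simp)
  have : 0 < #A := hA.card_pos
  simp only [hsum] at hle
  omega

/-- Dhar's burning algorithm, started from the vertices outside `A`: the vertices of `A` catch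
fire one at a time, each through more edges from burnt vertices than it holds chips. -/
lemma exists_burning_order {q : G.V} {D : G.Divisor}
    (hD : ∀ A : Finset G.V, A.Nonempty → q ∉ A → ∃ w ∈ A, D w < G.numEdgesTo w Aᶜ)
    (A : Finset G.V) (hqA : q ∉ A) :
    ∃ p : G.V → ℕ, (∀ x ∉ A, p x = 0) ∧ (∀ x ∈ A, #Aᶜ ≤ p x) ∧ Set.InjOn p A ∧
      ∀ w ∈ A, D w < G.indeg p w := by
  induction h : #A generalizing A with
  | zero =>
    obtain rfl := card_eq_zero.mp h
    exact ⟨0, by simp, by simp, by simp, by simp⟩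
  | succ n ih =>
    obtain ⟨w, hwA, hw⟩ := hD A (card_pos.mp (by omega)) hqA
    obtain ⟨p, hp₀, hpA, hpinj, hpD⟩ := ih (A.erase w) (fun h => hqA (mem_of_mem_erase h))
      (by rw [card_erase_of_mem hwA, h]; rfl)
    have hcompl : #(A.erase w)ᶜ = #Aᶜ + 1 := by
      rw [card_compl, card_compl, card_erase_of_mem hwA]
      have := card_le_univ A
      omega
    have hAc : 0 < #Aᶜ := card_pos.mpr ⟨q, mem_compl.mpr hqA⟩
    have hlt : ∀ x ∈ A.erase w, #Aᶜ < p x := fun x hx => by have := hpA x hx; omega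
    refine ⟨update p w #Aᶜ, fun x hx => ?_, fun x hx => ?_, ?_, fun u hu => ?_⟩
    · rw [update_of_ne (ne_of_mem_of_not_mem hwA hx).symm]
      exact hp₀ x fun h => hx (mem_of_mem_erase h)
    · rcases eq_or_ne x w with rfl | hxw
      · simp
      · rw [update_of_ne hxw]
        exact (hlt x (mem_erase.mpr ⟨hxw, hx⟩)).le
    · have hA : (A : Set G.V) = insert w ↑(A.erase w) := by simp [hwA]
      rw [hA, Set.injOn_insert (by simp)]
      refine ⟨hpinj.congr fun x hx => (update_of_ne (ne_of_mem_erase hx) _ _).symm, ?_⟩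
      rintro ⟨x, hx, hxw⟩
      rw [update_self, update_of_ne (ne_of_mem_erase hx)] at hxw
      exact (hlt x hx).ne' hxw
    · rcases eq_or_ne u w with rfl | huw
      · refine hw.trans_le (Nat.cast_le.mpr (G.numEdgesTo_mono u fun x hx => ?_))
        have hxu : x ≠ u := ne_of_mem_of_not_mem hwA (mem_compl.mp hx) |>.symm
        simp [update_of_ne hxu, hp₀ x (fun h => mem_compl.mp hx (mem_of_mem_erase h)), hAc]
      · have hu' : u ∈ A.erase w := mem_erase.mpr ⟨huw, hu⟩
        refine (hpD u hu').trans_le (Nat.cast_le.mpr (G.numEdgesTo_mono u fun x hx => ?_))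
        simp only [mem_filter, mem_univ, true_and, update_of_ne huw] at hx ⊢
        rcases eq_or_ne x w with rfl | hxw
        · simpa using hlt u hu'
        · rwa [update_of_ne hxw]

lemma exists_indeg_of_isReduced {q : G.V} {D : G.Divisor} (hD : G.IsReduced q D) :
    ∃ p : G.V → ℕ, Injective p ∧ p q = 0 ∧ ∀ w ≠ q, D w < G.indeg p w := by
  obtain ⟨p, hq, hpos, hinj, hp⟩ := G.exists_burning_order hD.2 {q}ᶜ (by simp)
  have hq₀ : p q = 0 := hq q (by simp)
  have hpos' : ∀ x ≠ q, 1 ≤ p x := fun x hx => by simpa using hpos x (by simpa using hx)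
  refine ⟨p, fun x y hxy => ?_, hq₀, fun w hw => hp w (by simpa using hw)⟩
  by_cases hx : x = q <;> by_cases hy : y = q
  · rw [hx, hy]
  · have := hpos' y hy
    rw [hx] at hxy
    omega
  · have := hpos' x hx
    rw [hy] at hxy
    omega
  · exact hinj (by simpa using hx) (by simpa using hy) hxy

lemma degree_sub (D D' : G.Divisor) : G.degree (D - D') = G.degree D - G.degree D' :=
  sum_sub_distrib ..

lemma degree_single (v : G.V) (n : ℤ) : G.degree (Pi.single v n) = n := by
  simp [degree]

lemma effective_single (v : G.V) {n : ℤ} (hn : 0 ≤ n) : G.Effective (Pi.single v n) := by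
  intro w
  rcases eq_or_ne w v with rfl | hw
  · simpa using hn
  · simp [hw]

lemma degree_nonneg {D : G.Divisor} (hD : G.Effective D) : 0 ≤ G.degree D :=
  sum_nonneg fun v _ => hD v

lemma degree_indeg_sub_one {α : Type*} [LinearOrder α] {p : G.V → α} (hp : Injective p) :
    G.degree (fun w => (G.indeg p w : ℤ) - 1) = G.genus - 1 := by
  simp only [degree, genus, sum_sub_distrib, sum_const, card_univ, nsmul_eq_mul, mul_one]
  push_cast [← Nat.cast_sum, G.sum_indeg hp]
  ring

noncomputable def canonical : G.Divisor := fun v => G.valence v - 2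

lemma degree_canonical : G.degree G.canonical = 2 * G.genus - 2 := by
  have := G.sum_valence
  simp only [degree, canonical, genus, sum_sub_distrib, sum_const, card_univ, nsmul_eq_mul]
  push_cast [← Nat.cast_sum, this]
  ring

theorem exists_effective_or_linEquiv_indeg_sub_one (hG : G.Connected) {D : G.Divisor}
    (hD : G.genus - 1 ≤ G.degree D) :
    (∃ E, G.Effective E ∧ G.LinEquiv D E) ∨
      ∃ p : G.V → ℕ, Injective p ∧ G.LinEquiv D fun w => (G.indeg p w : ℤ) - 1 := by
  obtain ⟨q⟩ := hG.1
  obtain ⟨D', hDD', hD'⟩ := G.exists_linEquiv_isReduced hG D q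
  obtain ⟨p, hp, hpq, hpD⟩ := G.exists_indeg_of_isReduced hD'
  by_cases hq : 0 ≤ D' q
  · refine .inl ⟨D', fun w => ?_, hDD'⟩
    rcases eq_or_ne w q with rfl | hw
    exacts [hq, hD'.1 w hw]
  refine .inr ⟨p, hp, ?_⟩
  have hle : ∀ w ∈ univ, D' w + 1 ≤ G.indeg p w := by
    intro w _
    rcases eq_or_ne w q with rfl | hw
    · omega
    · exact hpD w hw
  have hsum : ∑ w, (D' w + 1) = ∑ w, (G.indeg p w : ℤ) := by
    refine le_antisymm (sum_le_sum hle) ?_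
    have h₁ : ∑ w, (D' w + 1) = G.degree D' + Fintype.card G.V := by
      simp [degree, sum_add_distrib]
    have h₂ : ∑ w, (G.indeg p w : ℤ) =
        G.degree (fun w => (G.indeg p w : ℤ) - 1) + Fintype.card G.V := by
      simp [degree, sum_sub_distrib]
    rw [h₁, h₂, degree_indeg_sub_one _ hp, ← G.degree_eq_of_linEquiv hDD']
    omega
  convert hDD' using 2 with w
  have := (sum_eq_sum_iff_of_le hle).mp hsum w (mem_univ w)
  omega

theorem exists_effective_linEquiv_of_genus_le_degree (hG : G.Connected) {D : G.Divisor}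
    (hD : G.genus ≤ G.degree D) : ∃ E, G.Effective E ∧ G.LinEquiv D E := by
  refine (G.exists_effective_or_linEquiv_indeg_sub_one hG (by omega)).resolve_right ?_
  rintro ⟨p, hp, hDp⟩
  have := G.degree_eq_of_linEquiv hDp
  rw [degree_indeg_sub_one _ hp] at this
  omega

/-- Maximum principle: at the `p`-first vertex among the maxima of `f`, every in-edge comes from
a strictly lower vertex, so the Laplacian of `f` there is at least its in-degree. -/
theorem not_linEquiv_indeg_sub_one [Nonempty G.V] {α : Type*} [LinearOrder α] (p : G.V → α)
    {E : G.Divisor} (hE : G.Effective E) :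
    ¬ G.LinEquiv (fun w => (G.indeg p w : ℤ) - 1) E := by
  rintro ⟨f, hf⟩
  obtain ⟨m, -, hm⟩ := exists_max_image univ f univ_nonempty
  obtain ⟨w, hw, hwmin⟩ := exists_min_image {x | f x = f m} p ⟨m, by simp⟩
  have hw : f w = f m := by simpa using hw
  have hlap : (G.indeg p w : ℤ) ≤ G.laplacian f w :=
    calc (G.indeg p w : ℤ) = ∑ x ∈ {x | p x < p w}, (G.numEdges w x : ℤ) * 1 := by
          simp [indeg, numEdgesTo]
      _ ≤ ∑ x ∈ {x | p x < p w}, (G.numEdges w x : ℤ) * (f w - f x) := by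
          refine sum_le_sum fun x hx => mul_le_mul_of_nonneg_left ?_ (Nat.cast_nonneg _)
          have hx : f x ≠ f m := fun h => (mem_filter.mp hx).2.not_ge (hwmin x (by simpa using h))
          have := hm x (mem_univ x)
          omega
      _ ≤ ∑ x, (G.numEdges w x : ℤ) * (f w - f x) :=
          sum_le_sum_of_subset_of_nonneg (subset_univ _) fun x _ _ =>
            mul_nonneg (Nat.cast_nonneg _) (by linarith [hm x (mem_univ x)])
  have := congrFun hf w
  have := hE w
  simp only [Pi.sub_apply, laplacian] at *
  omega

lemma exists_eq_single_of_degree_eq_one {F : G.Divisor} (hF : G.Effective F)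
    (h : G.degree F = 1) : ∃ q, F = Pi.single q 1 := by
  obtain ⟨q, hq⟩ : ∃ q, 0 < F q := by
    by_contra! h₀
    have : G.degree F ≤ 0 := sum_nonpos fun v _ => h₀ v
    omega
  have hnn := sum_nonneg fun v (_ : v ∈ univ.erase q) => hF v
  have hsplit := add_sum_erase univ F (mem_univ q)
  unfold degree at h
  have hrest : ∑ v ∈ univ.erase q, F v = 0 := by omega
  have hFq : F q = 1 := by omega
  refine ⟨q, funext fun v => ?_⟩
  by_cases hv : v = q
  · rw [hv, hFq, Pi.single_eq_same]
  · rw [Pi.single_eq_of_ne hv,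
      (sum_eq_zero_iff_of_nonneg fun v _ => hF v).mp hrest v (by simp [hv])]

theorem rankGe_of_genus_add_le_degree (hG : G.Connected) {D : G.Divisor} {k : ℤ}
    (h : G.genus + k ≤ G.degree D) : G.RankGe D k :=
  fun F _ hF => G.exists_effective_linEquiv_of_genus_le_degree hG (by rw [degree_sub, hF]; omega)

theorem rankGe_one_of_linEquiv_canonical (hG : G.Connected) (hg : 2 ≤ G.genus) {D : G.Divisor}
    (hKD : G.LinEquiv G.canonical D) : G.RankGe D 1 := by
  have := hG.1
  intro F hF hdeg
  obtain ⟨q, rfl⟩ := G.exists_eq_single_of_degree_eq_one hF hdeg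
  have hdegD : G.degree (D - Pi.single q 1) = 2 * G.genus - 3 := by
    rw [degree_sub, ← G.degree_eq_of_linEquiv hKD, degree_canonical, degree_single]
    ring
  refine (G.exists_effective_or_linEquiv_indeg_sub_one hG (by omega)).resolve_right ?_
  rintro ⟨p, hp, f₂, hf₂⟩
  obtain ⟨f₁, hf₁⟩ := hKD
  refine G.not_linEquiv_indeg_sub_one (toDual ∘ p) (G.effective_single q zero_le_one)
    ⟨f₁ + f₂, ?_⟩
  rw [laplacian_add, ← hf₁, ← hf₂]
  ext w
  have := G.indeg_add_indeg_toDual hp w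
  simp only [canonical, Pi.sub_apply, Pi.add_apply]
  omega

lemma le_degree_of_rankGe [Nonempty G.V] {D : G.Divisor} {k : ℤ} (hk : 0 ≤ k)
    (h : G.RankGe D k) : k ≤ G.degree D := by
  obtain ⟨v⟩ := ‹Nonempty G.V›
  obtain ⟨E, hE, hDE⟩ := h _ (G.effective_single v hk) (G.degree_single v k)
  have := G.degree_eq_of_linEquiv hDE
  rw [degree_sub, degree_single] at this
  linarith [G.degree_nonneg hE]

lemma le_rank [Nonempty G.V] {D : G.Divisor} {k : ℤ} (hk : 0 ≤ k) (h : G.RankGe D k) :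
    k ≤ G.rank D := by
  refine le_csSup ⟨G.degree D, fun r hr => ?_⟩ (.inr ⟨hk, h⟩)
  rcases hr with rfl | ⟨hr, hD⟩
  · linarith [G.le_degree_of_rankGe hk h]
  · exact G.le_degree_of_rankGe hr hD

end Multigraph

/-- If `G` is a graph with genus `g(G) ≤ 2`, then `gon(G) ≤ 2`. -/
theorem stmt_5 (G : Multigraph) (hG : G.Connected) (h : G.genus ≤ 2) :
    G.gonality ≤ 2 := by
  have := hG.1
  obtain ⟨D, hDeff, hDdeg, hD⟩ : ∃ D, G.Effective D ∧ G.degree D = 2 ∧ G.RankGe D 1 := by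
    rcases h.lt_or_eq with hlt | hg
    · obtain ⟨v⟩ := hG.1
      exact ⟨Pi.single v 2, G.effective_single v (by norm_num), G.degree_single v 2,
        G.rankGe_of_genus_add_le_degree hG (by rw [G.degree_single]; omega)⟩
    · obtain ⟨D, hD, hKD⟩ := G.exists_effective_linEquiv_of_genus_le_degree hG
        (D := G.canonical) (by rw [G.degree_canonical]; omega)
      refine ⟨D, hD, ?_, G.rankGe_one_of_linEquiv_canonical hG hg.ge hKD⟩
      rw [← G.degree_eq_of_linEquiv hKD, G.degree_canonical, hg]
      norm_num
  exact Nat.sInf_le ⟨D, hDeff, by exact_mod_cast hDdeg, G.le_rank zero_le_one hD⟩
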